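/- Let d ≥ 2, μ > 0, η ∈ ℝ^d, and f(η) = √(|η|² + μ²). Fix j ∈ {1,...,d} and let M(η) = (∂²f/∂η_k∂η_l(η))_{k,l ≠ j}, and let v(η) = (∂²f/∂η_k∂η_j(η))_{k ≠ j} ∈ ℝ^{d−1}. Then M(η) is invertible and the Schur complement satisfies: ∂²f/∂η_j²(η) − v(η)^T M(η)^{−1} v(η) = μ² / ((η_j² + μ²) √(|η|² + μ²)). In particular this quantity is strictly positive, and for |η| ≤ R and μ ∈ (0,1] it is bounded below by μ²/((R²+1)√(R²+1)). -/

import Mathlib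

/-!
Writing `S = |η|² + μ²`, the Hessian of `√S` is `S^{-1/2} (1 - S⁻¹ η ηᵀ)`, a scalar multiple of a
rank-one perturbation of the identity, and so is its principal submatrix `M` on the indices
`k ≠ j`. The matrix determinant lemma makes `M` invertible, and the restriction `η'` of `η` to
those indices is an eigenvector of `M`, while the mixed column `v` is a multiple of `η'`.
Hence `vᵀ M⁻¹ v` is explicit, and the Schur complement collapses to
`S^{-1/2} (1 - S⁻¹|η|²) / (1 - S⁻¹|η'|²) = μ² / ((η_j² + μ²) √S)`.
-/

/-- The Hessian matrix of `f(η) = √(|η|² + μ²)` at `η`. -/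
noncomputable def hessKG {d : ℕ} (μ : ℝ) (η : Fin d → ℝ) : Matrix (Fin d) (Fin d) ℝ :=
  Matrix.of fun k l =>
    fderiv ℝ
      (fun η' : Fin d → ℝ =>
        fderiv ℝ (fun η'' : Fin d → ℝ => Real.sqrt ((∑ i, η'' i ^ 2) + μ ^ 2)) η'
          (Pi.single l 1))
      η (Pi.single k 1)

/-- The `(d-1)×(d-1)` submatrix of the Hessian of `f(η) = √(|η|² + μ²)` obtained by
deleting the `j`-th row and `j`-th column. -/
noncomputable def hessKGsub {d : ℕ} (μ : ℝ) (η : Fin d → ℝ) (j : Fin d) :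
    Matrix {k : Fin d // k ≠ j} {k : Fin d // k ≠ j} ℝ :=
  Matrix.of fun k l => hessKG μ η (k : Fin d) (l : Fin d)

/-- The mixed-derivative vector `v(η) = (∂²f/∂η_k∂η_j(η))_{k ≠ j}`. -/
noncomputable def hessKGmix {d : ℕ} (μ : ℝ) (η : Fin d → ℝ) (j : Fin d) :
    {k : Fin d // k ≠ j} → ℝ :=
  fun k => hessKG μ η (k : Fin d) j

namespace Matrix

variable {K ι : Type*} [Field K] [DecidableEq ι]

section

variable (c s : K) (y : ι → K) (j : ι)

theorem submatrix_smul_one_sub_smul_vecMulVec :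
    (c • (1 - s • vecMulVec y y)).submatrix ((↑) : {k // k ≠ j} → ι) ((↑) : {k // k ≠ j} → ι)
      = c • (1 - vecMulVec (fun k : {k // k ≠ j} => y k) (s • fun k : {k // k ≠ j} => y k)) := by
  ext k l
  simp [one_apply, Subtype.ext_iff, vecMulVec_apply]

theorem smul_one_sub_smul_vecMulVec_apply_of_ne {k : ι} (hk : k ≠ j) :
    (c • (1 - s • vecMulVec y y)) k j = -(c * s * y j) * y k := by
  simp only [smul_apply, sub_apply, one_apply_ne hk, vecMulVec_apply, smul_eq_mul, zero_sub]
  ring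

end

variable [Fintype ι]

theorem det_one_sub_vecMulVec (u v : ι → K) : (1 - vecMulVec u v).det = 1 - v ⬝ᵥ u := by
  rw [vecMulVec_eq Unit, det_one_sub_mul_comm, det_unique, sub_apply, one_apply_eq,
    replicateRow_mul_replicateCol_apply]

theorem one_sub_vecMulVec_mulVec_self (u v : ι → K) :
    (1 - vecMulVec u v) *ᵥ u = (1 - v ⬝ᵥ u) • u := by
  rw [sub_mulVec, one_mulVec, vecMulVec_mulVec, op_smul_eq_smul, sub_smul, one_smul]

theorem inv_one_sub_vecMulVec_mulVec_self (u v : ι → K) (h : 1 - v ⬝ᵥ u ≠ 0) :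
    (1 - vecMulVec u v)⁻¹ *ᵥ u = (1 - v ⬝ᵥ u)⁻¹ • u := by
  have hdet : IsUnit (1 - vecMulVec u v).det := by
    rw [det_one_sub_vecMulVec]
    exact h.isUnit
  calc (1 - vecMulVec u v)⁻¹ *ᵥ u
      = (1 - vecMulVec u v)⁻¹ *ᵥ ((1 - v ⬝ᵥ u)⁻¹ • (1 - vecMulVec u v) *ᵥ u) := by
        rw [one_sub_vecMulVec_mulVec_self, smul_smul, inv_mul_cancel₀ h, one_smul]
    _ = (1 - v ⬝ᵥ u)⁻¹ • u := by
        rw [mulVec_smul, mulVec_mulVec, nonsing_inv_mul _ hdet, one_mulVec]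

/-- The column `(H k j)_{k ≠ j}` stands on both sides, so for symmetric `H` this is the Schur
complement of the principal block on the indices `k ≠ j`. -/
noncomputable def schurComplementAt (H : Matrix ι ι K) (j : ι) : K :=
  H j j - ∑ k : {k // k ≠ j}, H k j *
    ((H.submatrix ((↑) : {k // k ≠ j} → ι) ((↑) : {k // k ≠ j} → ι))⁻¹ *ᵥ fun k => H k j) k

variable {c s : K} {y : ι → K} {j : ι}

theorem dotProduct_self_subtype_ne :
    (fun k : {k // k ≠ j} => y k) ⬝ᵥ (fun k => y k) = (∑ i, y i ^ 2) - y j ^ 2 := by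
  rw [Fintype.sum_eq_add_sum_subtype_ne (fun i => y i ^ 2) j, add_sub_cancel_left]
  simp only [dotProduct, sq]

theorem one_sub_dotProduct_smul_subtype_ne_ne_zero
    (hj : 1 - s * (∑ i, y i ^ 2) + s * y j ^ 2 ≠ 0) :
    1 - (s • fun k : {k // k ≠ j} => y k) ⬝ᵥ (fun k => y k) ≠ 0 := by
  rw [smul_dotProduct, dotProduct_self_subtype_ne, smul_eq_mul]
  convert hj using 1
  ring

theorem isUnit_det_submatrix_smul_one_sub_smul_vecMulVec (hc : c ≠ 0)
    (hj : 1 - s * (∑ i, y i ^ 2) + s * y j ^ 2 ≠ 0) :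
    IsUnit ((c • (1 - s • vecMulVec y y)).submatrix ((↑) : {k // k ≠ j} → ι)
      ((↑) : {k // k ≠ j} → ι)).det := by
  rw [submatrix_smul_one_sub_smul_vecMulVec, det_smul, det_one_sub_vecMulVec]
  exact (mul_ne_zero (pow_ne_zero _ hc) (one_sub_dotProduct_smul_subtype_ne_ne_zero hj)).isUnit

theorem schurComplementAt_smul_one_sub_smul_vecMulVec (hc : c ≠ 0)
    (hj : 1 - s * (∑ i, y i ^ 2) + s * y j ^ 2 ≠ 0) :
    schurComplementAt (c • (1 - s • vecMulVec y y)) j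
      = c * (1 - s * ∑ i, y i ^ 2) / (1 - s * (∑ i, y i ^ 2) + s * y j ^ 2) := by
  set y' := fun k : {k // k ≠ j} => y k
  have hq := one_sub_dotProduct_smul_subtype_ne_ne_zero hj
  have hyy : y' ⬝ᵥ y' = (∑ i, y i ^ 2) - y j ^ 2 := dotProduct_self_subtype_ne
  have hcol : (fun k : {k // k ≠ j} => (c • (1 - s • vecMulVec y y)) k j)
      = (-(c * s * y j)) • y' :=
    funext fun k => smul_one_sub_smul_vecMulVec_apply_of_ne c s y j k.2
  have hdiag : (c • (1 - s • vecMulVec y y)) j j = c * (1 - s * y j ^ 2) := by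
    simp [vecMulVec_apply, sq]
  have hinv : (c • (1 - vecMulVec y' (s • y')))⁻¹ *ᵥ y'
      = (c⁻¹ * (1 - (s • y') ⬝ᵥ y')⁻¹) • y' := by
    have := invertibleOfNonzero hc
    have hdet : IsUnit (1 - vecMulVec y' (s • y')).det := by
      rw [det_one_sub_vecMulVec]
      exact hq.isUnit
    rw [Matrix.inv_smul _ c hdet, invOf_eq_inv, smul_mulVec,
      inv_one_sub_vecMulVec_mulVec_self _ _ hq, smul_smul]
  change _ - (fun k : {k // k ≠ j} => (c • (1 - s • vecMulVec y y)) k j) ⬝ᵥ _ = _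
  rw [submatrix_smul_one_sub_smul_vecMulVec, hcol, hdiag, mulVec_smul, hinv]
  have hsub : 1 - s * ((∑ i, y i ^ 2) - y j ^ 2) = 1 - s * (∑ i, y i ^ 2) + s * y j ^ 2 := by
    ring
  simp only [smul_dotProduct, dotProduct_smul, hyy, smul_eq_mul, hsub]
  field_simp
  ring

end Matrix

section Calculus

variable {ι : Type*} [Fintype ι] {μ : ℝ}

theorem sum_sq_add_sq_pos (hμ : μ ≠ 0) (x : ι → ℝ) : 0 < (∑ i, x i ^ 2) + μ ^ 2 := by
  positivity

theorem differentiableAt_sqrt_sum_sq_add (hμ : μ ≠ 0) (x : ι → ℝ) :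
    DifferentiableAt ℝ (fun y : ι → ℝ => √((∑ i, y i ^ 2) + μ ^ 2)) x := by
  have := (sum_sq_add_sq_pos hμ x).ne'
  fun_prop (disch := assumption)

variable [DecidableEq ι]

theorem fderiv_sqrt_sum_sq_add_apply_single (hμ : μ ≠ 0) (x : ι → ℝ) (l : ι) :
    fderiv ℝ (fun y : ι → ℝ => √((∑ i, y i ^ 2) + μ ^ 2)) x (Pi.single l 1)
      = x l / √((∑ i, x i ^ 2) + μ ^ 2) := by
  have h := ((HasFDerivAt.fun_sum (u := Finset.univ) (A := fun i (y : ι → ℝ) => y i ^ 2)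
    fun i _ => (hasFDerivAt_apply i x).pow 2).add_const (μ ^ 2)).sqrt
      (sum_sq_add_sq_pos hμ x).ne'
  rw [h.fderiv]
  simp only [one_div, mul_inv_rev, Nat.add_one_sub_one, pow_one, nsmul_eq_mul, Nat.cast_ofNat,
    smul_apply, sum_apply, ContinuousLinearMap.proj_apply,
    Pi.single_apply, smul_eq_mul, mul_ite, mul_one, mul_zero, Finset.sum_ite_eq', Finset.mem_univ,
    ↓reduceIte]
  field_simp

theorem fderiv_fderiv_sqrt_sum_sq_add_apply_single (hμ : μ ≠ 0) (x : ι → ℝ) (k l : ι) :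
    fderiv ℝ (fun y : ι → ℝ =>
        fderiv ℝ (fun z : ι → ℝ => √((∑ i, z i ^ 2) + μ ^ 2)) y (Pi.single l 1))
      x (Pi.single k 1)
      = ((if k = l then 1 else 0) - x k * x l / ((∑ i, x i ^ 2) + μ ^ 2))
          / √((∑ i, x i ^ 2) + μ ^ 2) := by
  have hS := sum_sq_add_sq_pos hμ x
  have h : HasFDerivAt (fun y : ι → ℝ => y l * (√((∑ i, y i ^ 2) + μ ^ 2))⁻¹) _ x :=
    (hasFDerivAt_apply l x).fun_mul ((hasDerivAt_inv (Real.sqrt_pos.2 hS).ne').comp_hasFDerivAt x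
      (differentiableAt_sqrt_sum_sq_add hμ x).hasFDerivAt)
  simp only [fderiv_sqrt_sum_sq_add_apply_single hμ, div_eq_mul_inv]
  rw [h.fderiv]
  simp only [neg_smul, smul_neg, add_apply, neg_apply,
    smul_apply, fderiv_sqrt_sum_sq_add_apply_single hμ, smul_eq_mul,
    ContinuousLinearMap.proj_apply, Pi.single_apply, mul_ite, mul_one, mul_zero]
  rw [Real.sq_sqrt hS.le]
  obtain rfl | hkl := eq_or_ne k l
  · rw [if_pos rfl, if_pos rfl]
    ring
  · simp only [if_neg hkl, if_neg hkl.symm]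
    ring

end Calculus

open Matrix in
theorem hessKG_eq_smul_one_sub_smul_vecMulVec {d : ℕ} {μ : ℝ} (hμ : μ ≠ 0) (η : Fin d → ℝ) :
    hessKG μ η = (√((∑ i, η i ^ 2) + μ ^ 2))⁻¹
      • (1 - ((∑ i, η i ^ 2) + μ ^ 2)⁻¹ • vecMulVec η η) := by
  ext k l
  rw [hessKG, of_apply, fderiv_fderiv_sqrt_sum_sq_add_apply_single hμ]
  simp only [Matrix.smul_apply, Matrix.sub_apply, one_apply, vecMulVec_apply, smul_eq_mul]
  ring

theorem sq_div_le_sq_div_of_sqrt_sum_sq_le {ι : Type*} [Fintype ι] {μ R : ℝ} (hμ : 0 < μ)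
    (hμ1 : μ ≤ 1) (η : ι → ℝ) (j : ι) (hR : √(∑ i, η i ^ 2) ≤ R) :
    μ ^ 2 / ((R ^ 2 + 1) * √(R ^ 2 + 1))
      ≤ μ ^ 2 / ((η j ^ 2 + μ ^ 2) * √((∑ i, η i ^ 2) + μ ^ 2)) := by
  have hsum : (∑ i, η i ^ 2) ≤ R ^ 2 := (Real.sqrt_le_iff.1 hR).2
  have hμ2 : μ ^ 2 ≤ 1 := pow_le_one₀ hμ.le hμ1
  have hj : η j ^ 2 ≤ R ^ 2 :=
    (Finset.single_le_sum (fun i _ => sq_nonneg (η i)) (Finset.mem_univ j)).trans hsum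
  gcongr

theorem stmt_10_general (d : ℕ) (μ : ℝ) (hμ : 0 < μ) (η : Fin d → ℝ) (j : Fin d) :
    IsUnit (hessKGsub μ η j).det ∧
      hessKG μ η j j -
          (∑ k, hessKGmix μ η j k * (hessKGsub μ η j)⁻¹.mulVec (hessKGmix μ η j) k) =
        μ ^ 2 / ((η j ^ 2 + μ ^ 2) * Real.sqrt ((∑ i, η i ^ 2) + μ ^ 2)) ∧
      (0 < hessKG μ η j j -
          ∑ k, hessKGmix μ η j k * (hessKGsub μ η j)⁻¹.mulVec (hessKGmix μ η j) k) ∧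
      ∀ R : ℝ, Real.sqrt (∑ i, η i ^ 2) ≤ R → μ ≤ 1 →
        μ ^ 2 / ((R ^ 2 + 1) * Real.sqrt (R ^ 2 + 1)) ≤
          hessKG μ η j j -
            ∑ k, hessKGmix μ η j k * (hessKGsub μ η j)⁻¹.mulVec (hessKGmix μ η j) k := by
  have hS := sum_sq_add_sq_pos hμ.ne' η
  have hc : (√((∑ i, η i ^ 2) + μ ^ 2))⁻¹ ≠ 0 := inv_ne_zero (Real.sqrt_pos.2 hS).ne'
  have hj : 1 - ((∑ i, η i ^ 2) + μ ^ 2)⁻¹ * (∑ i, η i ^ 2)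
      + ((∑ i, η i ^ 2) + μ ^ 2)⁻¹ * η j ^ 2 ≠ 0 := by
    field_simp
    rw [add_sub_cancel_left]
    positivity
  have hschur : Matrix.schurComplementAt (hessKG μ η) j
      = μ ^ 2 / ((η j ^ 2 + μ ^ 2) * √((∑ i, η i ^ 2) + μ ^ 2)) := by
    rw [hessKG_eq_smul_one_sub_smul_vecMulVec hμ.ne',
      Matrix.schurComplementAt_smul_one_sub_smul_vecMulVec hc hj]
    field_simp
    rw [add_sub_cancel_left, add_comm (μ ^ 2)]
    field_simp
  change IsUnit ((hessKG μ η).submatrix _ _).det ∧ (hessKG μ η).schurComplementAt j = _ ∧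
    0 < (hessKG μ η).schurComplementAt j ∧ ∀ R, _ → _ → _ ≤ (hessKG μ η).schurComplementAt j
  rw [hschur, hessKG_eq_smul_one_sub_smul_vecMulVec hμ.ne']
  exact ⟨Matrix.isUnit_det_submatrix_smul_one_sub_smul_vecMulVec hc hj, rfl, by positivity,
    fun R hR hμ1 => sq_div_le_sq_div_of_sqrt_sum_sq_le hμ hμ1 η j hR⟩

/-- **Schur complement of the Hessian of the Klein–Gordon symbol**: `M(η)` is invertible and
`∂²f/∂η_j² - vᵀ M⁻¹ v = μ² / ((η_j² + μ²)√(|η|²+μ²))`; this quantity is strictly positive,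
and for `|η| ≤ R`, `μ ∈ (0,1]` it is at least `μ²/((R²+1)√(R²+1))`. -/
theorem stmt_10 (d : ℕ) (hd : 2 ≤ d) (μ : ℝ) (hμ : 0 < μ) (η : Fin d → ℝ) (j : Fin d) :
    IsUnit (hessKGsub μ η j).det ∧
      hessKG μ η j j -
          (∑ k, hessKGmix μ η j k * (hessKGsub μ η j)⁻¹.mulVec (hessKGmix μ η j) k) =
        μ ^ 2 / ((η j ^ 2 + μ ^ 2) * Real.sqrt ((∑ i, η i ^ 2) + μ ^ 2)) ∧
      (0 < hessKG μ η j j -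
          ∑ k, hessKGmix μ η j k * (hessKGsub μ η j)⁻¹.mulVec (hessKGmix μ η j) k) ∧
      ∀ R : ℝ, Real.sqrt (∑ i, η i ^ 2) ≤ R → μ ≤ 1 →
        μ ^ 2 / ((R ^ 2 + 1) * Real.sqrt (R ^ 2 + 1)) ≤
          hessKG μ η j j -
            ∑ k, hessKGmix μ η j k * (hessKGsub μ η j)⁻¹.mulVec (hessKGmix μ η j) k :=
  stmt_10_general d μ hμ η j
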